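/- arXiv:1402.6986 — 4 statements merged into one kernel-verified Lean document; each statement's English description precedes it below -/
import Mathlib

section
/- The graph of the sigmoid s̃_δ(x) = 2/(1 + e^{-x/δ}) - 1 is contained in any prescribed ε-neighborhood of the graph of the set-valued signum Sgn provided δ is sufficiently small: for every ε > 0 there exists δ₀ > 0 such that for all 0 < δ < δ₀ and all x ∈ ℝ, there exist x' ∈ ℝ and y' ∈ Sgn(x') with |x - x'| + |s̃_δ(x) - y'| < ε. -/
/-!
Writing the sigmoid as `2σ(x/δ) - 1` with the logistic function `σ`, its distance to
`sign x` is `2σ(-|x|/δ) ≤ 2δ/|x|`, because `e^u ≥ u`. Points with `|x| < ε/2` are matched with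
`(0, s̃_δ(x)) ∈ graph Sgn`, where the sigmoid value is admissible since it lies in `[-1, 1]`; points
with `|x| ≥ ε/2` are matched with `(x, sign x)`, at vertical distance `≤ 4δ/ε < ε` once `δ < ε²/4`.
-/

/-- The set-valued signum function. -/
noncomputable def Sgn (x : ℝ) : Set ℝ :=
  if x < 0 then {-1} else if x = 0 then Set.Icc (-1) 1 else {1}

open Real

lemma mem_Sgn_zero_iff {y : ℝ} : y ∈ Sgn 0 ↔ |y| ≤ 1 := by
  simp [Sgn, abs_le]

lemma Real.sign_mem_Sgn (x : ℝ) : Real.sign x ∈ Sgn x := by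
  rcases lt_trichotomy x 0 with hx | rfl | hx
  · simp [Sgn, Real.sign_of_neg hx, hx]
  · simp [mem_Sgn_zero_iff, Real.sign_zero]
  · simp [Sgn, Real.sign_of_pos hx, hx.not_gt, hx.ne']

lemma two_div_one_add_exp_neg_div_sub_one (x δ : ℝ) :
    2 / (1 + exp (-x / δ)) - 1 = 2 * sigmoid (x / δ) - 1 := by
  rw [sigmoid_def, neg_div, div_eq_mul_inv]

lemma abs_two_mul_sigmoid_sub_one_le (t : ℝ) : |2 * sigmoid t - 1| ≤ 1 := by
  rw [abs_le]
  constructor <;> linarith [sigmoid_pos t, sigmoid_lt_one t]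

lemma sigmoid_neg_le_inv {t : ℝ} (ht : 0 < t) : sigmoid (-t) ≤ t⁻¹ := by
  rw [sigmoid_def, neg_neg]
  exact inv_anti₀ ht (by linarith [add_one_le_exp t, exp_pos t])

lemma abs_two_mul_sigmoid_div_sub_sign_le {x δ : ℝ} (hδ : 0 < δ) (hx : x ≠ 0) :
    |2 * sigmoid (x / δ) - 1 - Real.sign x| ≤ 2 * δ / |x| := by
  rcases hx.lt_or_gt with hx | hx
  · have hσ := sigmoid_neg_le_inv (div_pos (neg_pos.mpr hx) hδ)
    rw [inv_div, neg_div, neg_neg] at hσ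
    rw [Real.sign_of_neg hx, abs_of_neg hx, abs_of_pos (by linarith [sigmoid_pos (x / δ)])]
    calc 2 * sigmoid (x / δ) - 1 - -1 = 2 * sigmoid (x / δ) := by ring
      _ ≤ 2 * δ / -x := by rw [mul_div_assoc]; gcongr
  · have hσ := sigmoid_neg_le_inv (div_pos hx hδ)
    rw [inv_div, sigmoid_neg] at hσ
    rw [Real.sign_of_pos hx, abs_of_pos hx, abs_of_neg (by linarith [sigmoid_lt_one (x / δ)])]
    calc -(2 * sigmoid (x / δ) - 1 - 1) = 2 * (1 - sigmoid (x / δ)) := by ring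
      _ ≤ 2 * δ / x := by rw [mul_div_assoc]; gcongr

theorem sigmoid_graph_approx_Sgn :
    ∀ ε : ℝ, 0 < ε → ∃ δ₀ : ℝ, 0 < δ₀ ∧ ∀ δ : ℝ, 0 < δ → δ < δ₀ → ∀ x : ℝ,
      ∃ x' y' : ℝ, y' ∈ Sgn x' ∧ |x - x'| + |(2 / (1 + Real.exp (-x / δ)) - 1) - y'| < ε := by
  intro ε hε
  refine ⟨ε ^ 2 / 4, by positivity, fun δ hδ hδ₀ x => ?_⟩
  rw [two_div_one_add_exp_neg_div_sub_one]
  by_cases hxε : |x| < ε / 2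
  · refine ⟨0, 2 * sigmoid (x / δ) - 1, mem_Sgn_zero_iff.mpr (abs_two_mul_sigmoid_sub_one_le _), ?_⟩
    simp only [sub_zero, sub_self, abs_zero, add_zero]
    linarith
  · rw [not_lt] at hxε
    have hx : 0 < |x| := by linarith
    refine ⟨x, Real.sign x, Real.sign_mem_Sgn x, ?_⟩
    calc |x - x| + |2 * sigmoid (x / δ) - 1 - Real.sign x|
        ≤ 2 * δ / |x| := by
          simpa using abs_two_mul_sigmoid_div_sub_sign_le hδ (abs_pos.mp hx)
      _ ≤ 2 * δ / (ε / 2) := by gcongr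
      _ < ε := by rw [div_lt_iff₀ (by positivity)]; nlinarith
end

section
/- The matrix E = [[0,1,0],[0,0,1],[-1,-1,-2]] has characteristic polynomial λ³ + 2λ² + λ + 1, one real eigenvalue λ₁ ∈ (-2, -1.7), and a pair of complex conjugate eigenvalues with negative real part; in particular all eigenvalues λ of E satisfy |arg(λ)| > 0.92·π/2. -/
/-!
The cubic `λ³ + 2λ² + λ + 1` changes sign on `[-2, -1.7]`, so it has a real root `l` there.
Dividing by `λ - l` leaves `λ² + (l + 2)λ + (l + 1)²`, whose discriminant is negative for such `l`;
its roots are a conjugate pair with real part `-(l + 2)/2 < 0`. Every root therefore lies in the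
open left half-plane, where `|arg λ| > π/2 > 0.92 · π/2`.
-/

open Polynomial ComplexConjugate

theorem Matrix.charpoly_companion_fin_three {R : Type*} [CommRing R] (c₀ c₁ c₂ : R) :
    (!![0, 1, 0; 0, 0, 1; -c₀, -c₁, -c₂] : Matrix (Fin 3) (Fin 3) R).charpoly =
      X ^ 3 + C c₂ * X ^ 2 + C c₁ * X + C c₀ := by
  rw [Matrix.charpoly, Matrix.det_fin_three]
  simp
  ring

theorem Complex.pi_div_two_lt_abs_arg_of_re_neg {z : ℂ} (hz : z.re < 0) :
    Real.pi / 2 < |z.arg| :=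
  not_le.mp (abs_arg_le_pi_div_two_iff.not.mpr hz.not_ge)

theorem Complex.sub_mul_sub_conj (z w : ℂ) :
    (w - z) * (w - conj z) = w ^ 2 - 2 * z.re * w + Complex.normSq z := by
  have hsum := add_conj z
  have hprod := mul_conj z
  push_cast at hsum
  linear_combination -w * hsum + hprod

theorem exists_conj_pair_of_discrim_neg {p q : ℝ} (hpq : p ^ 2 < 4 * q) :
    ∃ z : ℂ, 0 < z.im ∧ z.re = -p / 2 ∧
      ∀ w : ℂ, w ^ 2 + p * w + q = (w - z) * (w - conj z) := by
  have hdisc : 0 < q - (p / 2) ^ 2 := by linarith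
  refine ⟨⟨-p / 2, √(q - (p / 2) ^ 2)⟩, Real.sqrt_pos.mpr hdisc, rfl, fun w ↦ ?_⟩
  have hnorm : Complex.normSq ⟨-p / 2, √(q - (p / 2) ^ 2)⟩ = q := by
    rw [Complex.normSq_mk, ← sq, ← sq, Real.sq_sqrt hdisc.le]
    ring
  rw [Complex.sub_mul_sub_conj, hnorm]
  push_cast
  ring

theorem cubic_eq_mul_of_root {R : Type*} [CommRing R] {l : R}
    (hl : l ^ 3 + 2 * l ^ 2 + l + 1 = 0) (w : R) :
    w ^ 3 + 2 * w ^ 2 + w + 1 = (w - l) * (w ^ 2 + (l + 2) * w + (l + 1) ^ 2) := by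
  linear_combination hl

theorem exists_root_cubic_mem_Ioo :
    ∃ l : ℝ, l ∈ Set.Ioo (-2 : ℝ) (-1.7) ∧ l ^ 3 + 2 * l ^ 2 + l + 1 = 0 := by
  have hcont : ContinuousOn (fun x : ℝ ↦ x ^ 3 + 2 * x ^ 2 + x + 1) (Set.Icc (-2) (-1.7)) := by
    fun_prop
  exact intermediate_value_Ioo (by norm_num) hcont (by constructor <;> norm_num)

theorem cubic_eq_mul_conj_pair :
    ∃ l : ℝ, l ∈ Set.Ioo (-2 : ℝ) (-1.7) ∧ l ^ 3 + 2 * l ^ 2 + l + 1 = 0 ∧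
      ∃ z : ℂ, 0 < z.im ∧ z.re < 0 ∧
        ∀ w : ℂ, w ^ 3 + 2 * w ^ 2 + w + 1 = (w - l) * ((w - z) * (w - conj z)) := by
  obtain ⟨l, ⟨hl₁, hl₂⟩, hl⟩ := exists_root_cubic_mem_Ioo
  obtain ⟨z, hz_im, hz_re, hz⟩ :=
    exists_conj_pair_of_discrim_neg (p := l + 2) (q := (l + 1) ^ 2) (by nlinarith)
  refine ⟨l, ⟨hl₁, hl₂⟩, hl, z, hz_im, by linarith, fun w ↦ ?_⟩
  have hlC : (l : ℂ) ^ 3 + 2 * (l : ℂ) ^ 2 + l + 1 = 0 := by exact_mod_cast congrArg Complex.ofReal hl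
  rw [cubic_eq_mul_of_root hlC, ← hz]
  push_cast
  ring

theorem sprott_error_matrix_stability :
    let E : Matrix (Fin 3) (Fin 3) ℝ := !![0, 1, 0; 0, 0, 1; -1, -1, -2]
    E.charpoly = X ^ 3 + C 2 * X ^ 2 + X + 1 ∧
    (∃ lam₁ : ℝ, lam₁ ∈ Set.Ioo (-2 : ℝ) (-1.7) ∧ lam₁ ^ 3 + 2 * lam₁ ^ 2 + lam₁ + 1 = 0) ∧
    (∃ z : ℂ, z.im ≠ 0 ∧ z.re < 0 ∧ z ^ 3 + 2 * z ^ 2 + z + 1 = 0 ∧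
      (starRingEnd ℂ z) ^ 3 + 2 * (starRingEnd ℂ z) ^ 2 + (starRingEnd ℂ z) + 1 = 0) ∧
    (∀ lam : ℂ, lam ^ 3 + 2 * lam ^ 2 + lam + 1 = 0 → 0.92 * Real.pi / 2 < |lam.arg|) := by
  intro E
  obtain ⟨l, hl_mem, hl, z, hz_im, hz_re, hfactor⟩ := cubic_eq_mul_conj_pair
  have hcharpoly : E.charpoly = X ^ 3 + C 2 * X ^ 2 + X + 1 := by
    simpa using Matrix.charpoly_companion_fin_three (1 : ℝ) 1 2
  have hre : ∀ lam : ℂ, lam ^ 3 + 2 * lam ^ 2 + lam + 1 = 0 → lam.re < 0 := by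
    intro lam hlam
    rw [hfactor] at hlam
    rcases mul_eq_zero.mp hlam with h | h
    · rw [sub_eq_zero.mp h, Complex.ofReal_re]; linarith [hl_mem.2]
    rcases mul_eq_zero.mp h with h | h
    · rwa [sub_eq_zero.mp h]
    · rwa [sub_eq_zero.mp h, Complex.conj_re]
  refine ⟨hcharpoly, ⟨l, hl_mem, hl⟩,
    ⟨z, hz_im.ne', hz_re, by rw [hfactor]; ring, by rw [hfactor]; ring⟩, fun lam hlam ↦ ?_⟩
  calc 0.92 * Real.pi / 2 < Real.pi / 2 := by linarith [Real.pi_pos]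
    _ < |lam.arg| := Complex.pi_div_two_lt_abs_arg_of_re_neg (hre lam hlam)
end

section
/- Every root λ ∈ ℂ of the polynomial P(λ) = λ²⁸ + 2λ¹⁹ + λ⁹ + 1 satisfies |arg(λ)| > π/20, where arg is the principal argument in (-π, π]. -/
/-!
Write `w = λ⁹`, so that `P(λ) = λ¹⁹ (w + 2) + (w + 1)`. Multiplying by `conj (w + 2)` and taking
imaginary parts, every root satisfies `Im (λ⁹) + |λ⁹ + 2|² Im (λ¹⁹) = 0`. If `0 < |arg λ| ≤ π/20`,
then `9 arg λ` and `19 arg λ` lie in `(-π, π)` with the sign of `arg λ`, so both imaginary parts have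
that same strict sign and the sum cannot vanish. If `arg λ = 0`, `λ` is a nonnegative real and
`P(λ) ≥ 1`.
-/

open Complex Real ComplexConjugate

namespace Complex

theorem im_pow_eq_norm_pow_mul_sin (z : ℂ) (n : ℕ) :
    (z ^ n).im = ‖z‖ ^ n * Real.sin (n * z.arg) := by
  conv_lhs => rw [← norm_mul_exp_arg_mul_I z, mul_pow, ← exp_nat_mul]
  rw [← ofReal_pow, ← ofReal_natCast, ← mul_assoc, ← ofReal_mul, im_ofReal_mul,
    exp_ofReal_mul_I_im]

theorem im_pow_pos_of_arg_pos {z : ℂ} {n : ℕ} (hn : 0 < n) (harg : 0 < z.arg)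
    (hlt : n * z.arg < π) : 0 < (z ^ n).im := by
  have hz : z ≠ 0 := fun h => by simp [h] at harg
  rw [im_pow_eq_norm_pow_mul_sin]
  exact mul_pos (pow_pos (norm_pos_iff.mpr hz) n)
    (sin_pos_of_pos_of_lt_pi (by positivity) hlt)

theorem im_pow_neg_of_arg_neg {z : ℂ} {n : ℕ} (hn : 0 < n) (harg : z.arg < 0)
    (hlt : -π < n * z.arg) : (z ^ n).im < 0 := by
  have hz : z ≠ 0 := fun h => by simp [h] at harg
  rw [im_pow_eq_norm_pow_mul_sin]
  exact mul_neg_of_pos_of_neg (pow_pos (norm_pos_iff.mpr hz) n)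
    (sin_neg_of_neg_of_neg_pi_lt (mul_neg_of_pos_of_neg (by positivity) harg) hlt)

theorem eq_ofReal_re_of_arg_eq_zero {z : ℂ} (h : z.arg = 0) : z = (z.re : ℂ) :=
  ext rfl (by simp [(arg_eq_zero_iff.mp h).2])

end Complex

theorem im_pow_nine_add_normSq_mul_im_pow_nineteen {z : ℂ}
    (h : z ^ 28 + 2 * z ^ 19 + z ^ 9 + 1 = 0) :
    (z ^ 9).im + normSq (z ^ 9 + 2) * (z ^ 19).im = 0 := by
  have hconj : (z ^ 19 * (z ^ 9 + 2) + (z ^ 9 + 1)) * conj (z ^ 9 + 2) = 0 := by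
    rw [show z ^ 19 * (z ^ 9 + 2) + (z ^ 9 + 1) = z ^ 28 + 2 * z ^ 19 + z ^ 9 + 1 by ring,
      h, zero_mul]
  rw [add_mul, mul_assoc, mul_conj] at hconj
  have him := congrArg im hconj
  simp only [add_im, mul_im, add_re, conj_re, conj_im, ofReal_re, ofReal_im, one_re, one_im,
    re_ofNat, im_ofNat, zero_im] at him
  linear_combination him

theorem sprott_incommensurate_roots_stability :
    ∀ lam : ℂ, lam ^ 28 + 2 * lam ^ 19 + lam ^ 9 + 1 = 0 →
      Real.pi / 20 < |lam.arg| := by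
  intro lam h
  by_contra! hsmall
  obtain ⟨hlo, hhi⟩ := abs_le.mp hsmall
  have hpi := Real.pi_pos
  have hsum := im_pow_nine_add_normSq_mul_im_pow_nineteen h
  have hnormSq := normSq_nonneg (lam ^ 9 + 2)
  rcases lt_trichotomy lam.arg 0 with hneg | hzero | hpos
  · have h9 := im_pow_neg_of_arg_neg (n := 9) (by norm_num) hneg (by push_cast; linarith)
    have h19 := im_pow_neg_of_arg_neg (n := 19) (by norm_num) hneg (by push_cast; linarith)
    nlinarith
  · have hre : 0 ≤ lam.re := (arg_eq_zero_iff.mp hzero).1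
    rw [eq_ofReal_re_of_arg_eq_zero hzero] at h
    exact (by positivity : 0 < lam.re ^ 28 + 2 * lam.re ^ 19 + lam.re ^ 9 + 1).ne'
      (by exact_mod_cast h)
  · have h9 := im_pow_pos_of_arg_pos (n := 9) (by norm_num) hpos (by push_cast; linarith)
    have h19 := im_pow_pos_of_arg_pos (n := 19) (by norm_num) hpos (by push_cast; linarith)
    nlinarith
end

section
/- If F : ℝ → Set ℝ is an upper semicontinuous set-valued map with nonempty compact convex values, then for every ε > 0 there exists a continuous function f : ℝ → ℝ such that for every x ∈ ℝ there exist x' ∈ ℝ and y' ∈ F(x') with |x - x'| ≤ ε and |f(x) - y'| ≤ ε, and f(x) lies in the convex hull of the image of F. -/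
/-!
Cover the domain by the balls `B(x, r x / 2)`, where `r x ≤ ε` is so small that `F` maps
`B(x, r x)` into the `ε`-thickening of `F x` (upper semicontinuity), take a subordinate
partition of unity `ρ` and a point `y x ∈ F x`, and set `f = ∑ ρ_i • y i`. At a given point,
let `j` have the largest radius among the indices `i` with `ρ_i ≠ 0`: all these `i` lie in
`B(j, r j)`, so every `y i` lies in the `ε`-thickening of `F j`, which is convex, hence so does
`f`.
-/

open Metric Set Topology

theorem exists_pos_forall_mem_ball_subset_thickening {X E : Type*} [PseudoMetricSpace X]
    [PseudoEMetricSpace E] {F : X → Set E} {x : X}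
    (husc : ∀ V : Set E, IsOpen V → F x ⊆ V → ∃ U ∈ 𝓝 x, ∀ z ∈ U, F z ⊆ V)
    {δ : ℝ} (hδ : 0 < δ) : ∃ r > 0, ∀ z ∈ ball x r, F z ⊆ thickening δ (F x) := by
  obtain ⟨U, hU, hUF⟩ := husc _ isOpen_thickening (self_subset_thickening hδ _)
  obtain ⟨r, hr, hrU⟩ := Metric.mem_nhds_iff.mp hU
  exact ⟨r, hr, fun z hz => hUF z (hrU hz)⟩

theorem PartitionOfUnity.IsSubordinate.exists_forall_ne_zero_mem_ball {X : Type*}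
    [PseudoMetricSpace X] {s : Set X} {ρ : PartitionOfUnity X X s} {r : X → ℝ}
    (hρ : ρ.IsSubordinate fun i => ball i (r i / 2)) {x : X} (hx : x ∈ s) :
    ∃ j, x ∈ ball j (r j / 2) ∧ ∀ i, ρ i x ≠ 0 → i ∈ ball j (r j) := by
  have hmem : ∀ i, ρ i x ≠ 0 → x ∈ ball i (r i / 2) := fun i hi => hρ i (subset_closure hi)
  have hne : (ρ.finsupport x).Nonempty :=
    Finset.nonempty_of_sum_ne_zero ((ρ.sum_finsupport hx).symm ▸ one_ne_zero)
  obtain ⟨j, hj, hjmax⟩ := (ρ.finsupport x).exists_max_image r hne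
  have hxj := hmem j ((ρ.mem_finsupport x).mp hj)
  refine ⟨j, hxj, fun i hi => ?_⟩
  have hxi := hmem i hi
  have hrij := hjmax i ((ρ.mem_finsupport x).mpr hi)
  rw [mem_ball] at hxi hxj ⊢
  calc dist i j ≤ dist x i + dist x j := dist_triangle_left _ _ _
    _ < r i / 2 + r j / 2 := add_lt_add hxi hxj
    _ ≤ r j := by linarith

theorem exists_continuous_approximate_selection {X E : Type*} [MetricSpace X]
    [NormedAddCommGroup E] [NormedSpace ℝ E] (F : X → Set E)
    (husc : ∀ x₀ : X, ∀ V : Set E, IsOpen V → F x₀ ⊆ V → ∃ U ∈ 𝓝 x₀, ∀ x ∈ U, F x ⊆ V)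
    (hne : ∀ x, (F x).Nonempty) (hconv : ∀ x, Convex ℝ (F x)) {ε : ℝ} (hε : 0 < ε) :
    ∃ f : X → E, Continuous f ∧ (∀ x, ∃ x' ∈ ball x ε, f x ∈ thickening ε (F x')) ∧
      ∀ x, f x ∈ convexHull ℝ (⋃ x, F x) := by
  have hradius : ∀ x, ∃ r > 0, r ≤ ε ∧ ∀ z ∈ ball x r, F z ⊆ thickening ε (F x) := fun x =>
    let ⟨r, hr, hrF⟩ := exists_pos_forall_mem_ball_subset_thickening (husc x) hε
    ⟨min r ε, lt_min hr hε, min_le_right _ _,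
      fun z hz => hrF z (ball_subset_ball (min_le_left _ _) hz)⟩
  choose r hr0 hrε hrF using hradius
  choose y hy using hne
  have hcover : univ ⊆ ⋃ i, ball i (r i / 2) := fun x _ =>
    mem_iUnion.mpr ⟨x, mem_ball_self (half_pos (hr0 x))⟩
  obtain ⟨ρ, hρ⟩ :=
    PartitionOfUnity.exists_isSubordinate isClosed_univ _ (fun _ => isOpen_ball) hcover
  refine ⟨fun x => ∑ᶠ i, ρ i x • y i,
    hρ.continuous_finsum_smul (fun _ => isOpen_ball) fun _ => continuousOn_const,
    fun x => ?_, fun x => ?_⟩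
  · obtain ⟨j, hxj, hsupp⟩ := hρ.exists_forall_ne_zero_mem_ball (mem_univ x)
    refine ⟨j, ?_, ?_⟩
    · rw [mem_ball_comm]
      exact ball_subset_ball (by linarith [hr0 j, hrε j]) hxj
    · exact ρ.finsum_smul_mem_convex (g := fun i _ => y i) (mem_univ x)
        (fun i hi => hrF j i (hsupp i hi) (hy i)) ((hconv j).thickening ε)
  · exact ρ.finsum_smul_mem_convex (g := fun i _ => y i) (mem_univ x)
      (fun i _ => subset_convexHull ℝ _ (mem_iUnion.mpr ⟨i, hy i⟩)) (convex_convexHull ℝ _)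

theorem cellina_approximate_selection_one_dim
    (F : ℝ → Set ℝ)
    (husc : ∀ x₀ : ℝ, ∀ E : Set ℝ, IsOpen E → F x₀ ⊆ E →
      ∃ U ∈ nhds x₀, ∀ x ∈ U, F x ⊆ E)
    (hval : ∀ x : ℝ, (F x).Nonempty ∧ IsCompact (F x) ∧ Convex ℝ (F x)) :
    ∀ ε : ℝ, 0 < ε → ∃ f : ℝ → ℝ, Continuous f ∧
      (∀ x : ℝ, ∃ x' y' : ℝ, y' ∈ F x' ∧ |x - x'| ≤ ε ∧ |f x - y'| ≤ ε) ∧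
      (∀ x : ℝ, f x ∈ convexHull ℝ (⋃ y : ℝ, F y)) := by
  intro ε hε
  obtain ⟨f, hf, hnear, hhull⟩ := exists_continuous_approximate_selection F husc
    (fun x => (hval x).1) (fun x => (hval x).2.2) hε
  refine ⟨f, hf, fun x => ?_, hhull⟩
  obtain ⟨x', hx', hfx⟩ := hnear x
  obtain ⟨y', hy', hdist⟩ := mem_thickening_iff.mp hfx
  rw [mem_ball', Real.dist_eq] at hx'
  rw [Real.dist_eq] at hdist
  exact ⟨x', y', hy', hx'.le, hdist.le⟩
end
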